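/- Fix c₀ ≠ 0 and define G : Θ₁ → ℝ², G(x, y) = (x², xy/√(x² + c₀²y²)), where Θ₁ = (0, ∞) × (−1, 1). Then: (i) G is injective on Θ₁; (ii) G is differentiable on Θ₁ and its Jacobian determinant at (x, y) equals 2x⁴/(x² + c₀²y²)^{3/2}, which is positive; (iii) the image of Θ₁ under G equals {(u, v) ∈ ℝ² : u > 0, v²(u + c₀²) < u}; and (iv) for every (x, y) ∈ Θ₁, writing (u, v) = G(x, y), one has u − c₀²v² = x⁴/(x² + c₀²y²) > 0. -/

import Mathlib

/-!
For fixed `x > 0` the second component `t ↦ x t / √(x² + c₀² t²)` has derivative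
`x³ / (x² + c₀² t²)^{3/2} > 0`, so it is strictly increasing; together with `x ↦ x²` on `x > 0`
this gives injectivity and the triangular Jacobian. Everything else rests on the identity
`u − c₀² v² = x⁴ / (x² + c₀² y²)`, which makes `v² (u + c₀²) < u` equivalent to `y² < 1` and
yields the explicit inverse `x = √u`, `y = v √u / √(u − c₀² v²)`.
-/

open Real Set

noncomputable section

def helicoidalV (c x y : ℝ) : ℝ := x * y / √(x ^ 2 + c ^ 2 * y ^ 2)

def helicoidalVInv (c x v : ℝ) : ℝ := v * x / √(x ^ 2 - c ^ 2 * v ^ 2)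

end

section

variable (c : ℝ)

theorem hasDerivAt_helicoidalV {x : ℝ} (hx : x ≠ 0) (y : ℝ) :
    HasDerivAt (helicoidalV c x) (x ^ 3 / (x ^ 2 + c ^ 2 * y ^ 2) ^ ((3 : ℝ) / 2)) y := by
  have hD : 0 < x ^ 2 + c ^ 2 * y ^ 2 := by positivity
  have hs : 0 < √(x ^ 2 + c ^ 2 * y ^ 2) := sqrt_pos.mpr hD
  have hinner : HasDerivAt (fun t : ℝ => x ^ 2 + c ^ 2 * t ^ 2) (c ^ 2 * (2 * y)) y := by
    simpa using ((hasDerivAt_pow 2 y).const_mul (c ^ 2)).const_add (x ^ 2)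
  have hpow : (x ^ 2 + c ^ 2 * y ^ 2) ^ ((3 : ℝ) / 2) = √(x ^ 2 + c ^ 2 * y ^ 2) ^ 3 := by
    rw [rpow_div_two_eq_sqrt _ hD.le]
    norm_cast
  refine (((hasDerivAt_id y).const_mul x).div (hinner.sqrt hD.ne') hs.ne').congr_deriv ?_
  rw [hpow]
  simp only [id]
  field_simp
  linear_combination sq_sqrt hD.le

theorem strictMono_helicoidalV {x : ℝ} (hx : 0 < x) : StrictMono (helicoidalV c x) :=
  strictMono_of_deriv_pos fun t => by
    rw [(hasDerivAt_helicoidalV c hx.ne' t).deriv]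
    positivity

theorem helicoidalV_sq (x y : ℝ) :
    helicoidalV c x y ^ 2 = x ^ 2 * y ^ 2 / (x ^ 2 + c ^ 2 * y ^ 2) := by
  rw [helicoidalV, div_pow, mul_pow, sq_sqrt (by positivity)]

theorem sq_sub_mul_helicoidalV_sq {x : ℝ} (hx : x ≠ 0) (y : ℝ) :
    x ^ 2 - c ^ 2 * helicoidalV c x y ^ 2 = x ^ 4 / (x ^ 2 + c ^ 2 * y ^ 2) := by
  rw [helicoidalV_sq]
  field_simp
  ring

theorem helicoidalV_sq_mul_lt_iff {x : ℝ} (hx : x ≠ 0) (y : ℝ) :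
    helicoidalV c x y ^ 2 * (x ^ 2 + c ^ 2) < x ^ 2 ↔ y ^ 2 < 1 := by
  have hD : 0 < x ^ 2 + c ^ 2 * y ^ 2 := by positivity
  have hx4 : 0 < x ^ 4 := by positivity
  rw [helicoidalV_sq, div_mul_eq_mul_div, div_lt_iff₀ hD, ← sub_pos, ← sub_pos (b := y ^ 2),
    show x ^ 2 * (x ^ 2 + c ^ 2 * y ^ 2) - x ^ 2 * y ^ 2 * (x ^ 2 + c ^ 2)
      = x ^ 4 * (1 - y ^ 2) by ring, mul_pos_iff_of_pos_left hx4]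

theorem helicoidalV_helicoidalVInv {x v : ℝ} (hx : 0 < x) (h : c ^ 2 * v ^ 2 < x ^ 2) :
    helicoidalV c x (helicoidalVInv c x v) = v := by
  have hd : 0 < x ^ 2 - c ^ 2 * v ^ 2 := sub_pos.mpr h
  have hs : 0 < √(x ^ 2 - c ^ 2 * v ^ 2) := sqrt_pos.mpr hd
  have hs2 := sq_sqrt hd.le
  rw [helicoidalV, helicoidalVInv]
  generalize √(x ^ 2 - c ^ 2 * v ^ 2) = s at hs hs2
  have hsum : x ^ 2 + c ^ 2 * (v * x / s) ^ 2 = (x ^ 2 / s) ^ 2 := by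
    field_simp
    linear_combination hs2
  rw [hsum, sqrt_sq (by positivity)]
  field_simp

theorem differentiableAt_helicoidalV {p : ℝ × ℝ} (hp : p.1 ≠ 0) :
    DifferentiableAt ℝ (fun q : ℝ × ℝ => helicoidalV c q.1 q.2) p := by
  unfold helicoidalV
  fun_prop (disch := positivity)

end

theorem helicoidal_change_of_variables (c₀ : ℝ) :
    let Θ₁ : Set (ℝ × ℝ) := Set.Ioi 0 ×ˢ Set.Ioo (-1) 1
    let G : ℝ × ℝ → ℝ × ℝ := fun p =>
      (p.1 ^ 2, p.1 * p.2 / Real.sqrt (p.1 ^ 2 + c₀ ^ 2 * p.2 ^ 2))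
    Set.InjOn G Θ₁ ∧
    (∀ p ∈ Θ₁,
      DifferentiableAt ℝ G p ∧
      deriv (fun t => (G (t, p.2)).1) p.1 * deriv (fun t => (G (p.1, t)).2) p.2
          - deriv (fun t => (G (p.1, t)).1) p.2 * deriv (fun t => (G (t, p.2)).2) p.1
        = 2 * p.1 ^ 4 / (p.1 ^ 2 + c₀ ^ 2 * p.2 ^ 2) ^ ((3 : ℝ) / 2) ∧
      0 < 2 * p.1 ^ 4 / (p.1 ^ 2 + c₀ ^ 2 * p.2 ^ 2) ^ ((3 : ℝ) / 2)) ∧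
    G '' Θ₁ = {q : ℝ × ℝ | 0 < q.1 ∧ q.2 ^ 2 * (q.1 + c₀ ^ 2) < q.1} ∧
    (∀ p ∈ Θ₁,
      (G p).1 - c₀ ^ 2 * (G p).2 ^ 2 = p.1 ^ 4 / (p.1 ^ 2 + c₀ ^ 2 * p.2 ^ 2) ∧
      0 < (G p).1 - c₀ ^ 2 * (G p).2 ^ 2) := by
  intro Θ₁ G
  refine ⟨?_, ?_, ?_, ?_⟩
  · rintro ⟨x, y⟩ ⟨hx : 0 < x, -⟩ ⟨x', y'⟩ ⟨hx' : 0 < x', -⟩ h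
    obtain ⟨hxx : x ^ 2 = x' ^ 2, hyy⟩ := Prod.ext_iff.mp h
    obtain rfl : x = x' := (pow_left_inj₀ hx.le hx'.le two_ne_zero).mp hxx
    exact Prod.ext rfl ((strictMono_helicoidalV c₀ hx).injective hyy)
  · rintro ⟨x, y⟩ ⟨hx : 0 < x, -⟩
    refine ⟨(differentiableAt_fst.pow 2).prodMk (differentiableAt_helicoidalV c₀ hx.ne'),
      ?_, by positivity⟩
    rw [show deriv (fun t => (G (x, t)).2) y = _ from (hasDerivAt_helicoidalV c₀ hx.ne' y).deriv]
    simp only [G, deriv_pow_field, deriv_const, zero_mul, sub_zero]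
    norm_num
    ring
  · ext ⟨u, v⟩
    constructor
    · rintro ⟨⟨x, y⟩, ⟨hx : 0 < x, hy⟩, hG⟩
      obtain ⟨rfl, rfl⟩ := Prod.ext_iff.mp hG
      refine ⟨by positivity, (helicoidalV_sq_mul_lt_iff c₀ hx.ne' y).mpr ?_⟩
      exact sq_lt_one_iff_abs_lt_one y |>.mpr (abs_lt.mpr hy)
    · rintro ⟨hu, hv⟩
      have hx : 0 < √u := sqrt_pos.mpr hu
      have hx2 : √u ^ 2 = u := sq_sqrt hu.le
      have hcv : c₀ ^ 2 * v ^ 2 < √u ^ 2 := by nlinarith [mul_nonneg (sq_nonneg v) hu.le]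
      have hGinv := helicoidalV_helicoidalVInv c₀ hx hcv
      refine ⟨(√u, helicoidalVInv c₀ √u v), ⟨hx, ?_⟩, Prod.ext hx2 hGinv⟩
      rw [Set.mem_Ioo, ← abs_lt, ← sq_lt_one_iff_abs_lt_one,
        ← helicoidalV_sq_mul_lt_iff c₀ hx.ne', hGinv, hx2]
      exact hv
  · rintro ⟨x, y⟩ ⟨hx : 0 < x, -⟩
    have h := sq_sub_mul_helicoidalV_sq c₀ hx.ne' y
    exact ⟨h, h ▸ by positivity⟩
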